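/- arXiv:2102.02073 — 7 statements merged into one kernel-verified Lean document; each statement's English description precedes it below -/
import Mathlib

section
/- (Lemma 3.1 for m = 2, p ≠ −1) Let n ≥ 1, let p be a real number with p ≠ −1, and let u, v be positive C^2 functions on ℝ^n satisfying v(x) = ∫_0^{u(x)} exp(s^{p+1}/(p+1)) ds for every x ∈ ℝ^n. If Δv(x) ≤ 0 for all x ∈ ℝ^n, then Δu(x) + u(x)^p ‖∇u(x)‖^2 ≤ 0 for all x ∈ ℝ^n. -/
/-! Write `v = F ∘ u` with `F t = ∫_0^t g`, `g s = exp (s^(p+1)/(p+1))`. Then `F' = g` and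
`g' s = g s * s^p`, so the chain rule for the Laplacian gives
`Δv = g(u) (Δu + u^p ‖∇u‖²)`, and `g > 0` transfers the sign of `Δv` to the bracket. -/

open MeasureTheory Real

/-- The Laplacian of `f : ℝ^n → ℝ`: the sum over the standard basis of the
second directional derivatives (the trace of the Hessian). -/
noncomputable def euclideanLaplacian {n : ℕ}
    (f : EuclideanSpace ℝ (Fin n) → ℝ) (x : EuclideanSpace ℝ (Fin n)) : ℝ :=
  ∑ i : Fin n,
    fderiv ℝ (fun y => fderiv ℝ f y (EuclideanSpace.single i 1)) x
      (EuclideanSpace.single i 1)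

theorem sum_fderiv_single_sq_eq_norm_gradient_sq {n : ℕ}
    (f : EuclideanSpace ℝ (Fin n) → ℝ) (x : EuclideanSpace ℝ (Fin n)) :
    ∑ i, fderiv ℝ f x (EuclideanSpace.single i 1) ^ 2 = ‖gradient f x‖ ^ 2 := by
  rw [EuclideanSpace.real_norm_sq_eq]
  congr! 2 with i
  rw [← inner_gradient_left, EuclideanSpace.inner_single_right, conj_trivial, one_mul]

theorem euclideanLaplacian_comp {n : ℕ} {F F' : ℝ → ℝ} {F'' : ℝ}
    {u : EuclideanSpace ℝ (Fin n) → ℝ} {x : EuclideanSpace ℝ (Fin n)}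
    (hu : Differentiable ℝ u) (hu' : DifferentiableAt ℝ (fderiv ℝ u) x)
    (hF : ∀ y, HasDerivAt F (F' (u y)) (u y)) (hF' : HasDerivAt F' F'' (u x)) :
    euclideanLaplacian (fun y => F (u y)) x
      = F' (u x) * euclideanLaplacian u x + F'' * ‖gradient u x‖ ^ 2 := by
  have hfderiv : fderiv ℝ (fun y => F (u y)) = fun y => F' (u y) • fderiv ℝ u y :=
    funext fun y => ((hF y).comp_hasFDerivAt y (hu y).hasFDerivAt).fderiv
  have hsecond : ∀ e, fderiv ℝ (fun y => F' (u y) * fderiv ℝ u y e) x e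
      = F' (u x) * fderiv ℝ (fun y => fderiv ℝ u y e) x e + F'' * fderiv ℝ u x e ^ 2 := by
    intro e
    have hF'u : HasFDerivAt (fun y => F' (u y)) (F'' • fderiv ℝ u x) x :=
      hF'.comp_hasFDerivAt x (hu x).hasFDerivAt
    have hue := (hu'.clm_apply (differentiableAt_const e)).hasFDerivAt
    rw [(hF'u.fun_mul hue).fderiv]
    simp only [add_apply, smul_apply, smul_eq_mul]
    ring
  simp only [euclideanLaplacian, hfderiv, smul_apply, smul_eq_mul, hsecond,
    Finset.sum_add_distrib, ← Finset.mul_sum, sum_fderiv_single_sq_eq_norm_gradient_sq]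

theorem hasDerivAt_setIntegral_Ioo {E : Type*} [NormedAddCommGroup E] [NormedSpace ℝ E]
    [CompleteSpace E] {g : ℝ → E} {a t : ℝ} (hat : a < t)
    (hint : IntegrableOn g (Set.Ioo a t)) (hmeas : StronglyMeasurableAtFilter g (nhds t))
    (hcont : ContinuousAt g t) :
    HasDerivAt (fun r => ∫ s in Set.Ioo a r, g s) (g t) t := by
  have hderiv := intervalIntegral.integral_hasDerivAt_right
    ((intervalIntegrable_iff_integrableOn_Ioo_of_le hat.le).mpr hint) hmeas hcont
  refine hderiv.congr_of_eventuallyEq ?_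
  filter_upwards [eventually_gt_nhds hat] with r hr
  rw [intervalIntegral.integral_of_le hr.le, integral_Ioc_eq_integral_Ioo]

theorem integrableOn_exp_rpow_div_Ioo (p : ℝ) {t : ℝ} :
    IntegrableOn (fun s => exp (s ^ (p + 1) / (p + 1))) (Set.Ioo 0 t) := by
  refine Measure.integrableOn_of_bounded (M := exp (max (t ^ (p + 1) / (p + 1)) 0))
    (by simp) (by fun_prop) ?_
  filter_upwards [ae_restrict_mem measurableSet_Ioo] with s hs
  rw [norm_of_nonneg (exp_pos _).le, exp_le_exp]
  rcases lt_or_ge 0 (p + 1) with h | h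
  · exact le_max_of_le_left <| div_le_div_of_nonneg_right
      (rpow_le_rpow hs.1.le hs.2.le h.le) h.le
  · exact le_max_of_le_right <| div_nonpos_of_nonneg_of_nonpos (rpow_nonneg hs.1.le _) h

theorem hasDerivAt_integral_Ioo_exp_rpow_div (p : ℝ) {t : ℝ} (ht : 0 < t) :
    HasDerivAt (fun r => ∫ s in Set.Ioo 0 r, exp (s ^ (p + 1) / (p + 1)))
      (exp (t ^ (p + 1) / (p + 1))) t :=
  hasDerivAt_setIntegral_Ioo ht (integrableOn_exp_rpow_div_Ioo p)
    ((by fun_prop : Measurable _).stronglyMeasurable.stronglyMeasurableAtFilter)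
    (by fun_prop (disch := exact Or.inl ht.ne'))

theorem hasDerivAt_exp_rpow_div {p t : ℝ} (hp : p + 1 ≠ 0) (ht : 0 < t) :
    HasDerivAt (fun s => exp (s ^ (p + 1) / (p + 1)))
      (exp (t ^ (p + 1) / (p + 1)) * t ^ p) t := by
  have hpow := hasDerivAt_rpow_const (x := t) (p := p + 1) (Or.inl ht.ne')
  convert (hpow.div_const (p + 1)).exp using 1
  rw [add_sub_cancel_right]
  field_simp

theorem change_of_variable_superharmonic_general (n : ℕ)
    (p : ℝ) (hp : p ≠ -1)
    (u v : EuclideanSpace ℝ (Fin n) → ℝ)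
    (hu : ContDiff ℝ 2 u)
    (hupos : ∀ x, 0 < u x)
    (huv : ∀ x, v x = ∫ s in Set.Ioo (0 : ℝ) (u x), Real.exp (s ^ (p + 1) / (p + 1)))
    (hsub : ∀ x, euclideanLaplacian v x ≤ 0) :
    ∀ x, euclideanLaplacian u x + u x ^ p * ‖gradient u x‖ ^ (2 : ℝ) ≤ 0 := by
  intro x
  have hp1 : p + 1 ≠ 0 := fun h => hp (eq_neg_of_add_eq_zero_left h)
  have hLap : euclideanLaplacian v x = exp (u x ^ (p + 1) / (p + 1)) *
      (euclideanLaplacian u x + u x ^ p * ‖gradient u x‖ ^ 2) := by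
    rw [funext huv, euclideanLaplacian_comp (hu.differentiable two_ne_zero)
      ((hu.fderiv_right le_rfl).differentiable one_ne_zero x)
      (fun y => hasDerivAt_integral_Ioo_exp_rpow_div p (hupos y))
      (hasDerivAt_exp_rpow_div hp1 (hupos x))]
    ring
  rw [rpow_two]
  exact nonpos_of_mul_nonpos_right (hLap ▸ hsub x) (exp_pos _)

/-- Lemma 3.1 for `m = 2`, `p ≠ −1`: if `v = ∫_0^u exp(s^{p+1}/(p+1)) ds` is
superharmonic, then `Δu + u^p |∇u|^2 ≤ 0`. -/
theorem change_of_variable_superharmonic (n : ℕ) (hn : 1 ≤ n)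
    (p : ℝ) (hp : p ≠ -1)
    (u v : EuclideanSpace ℝ (Fin n) → ℝ)
    (hu : ContDiff ℝ 2 u) (hv : ContDiff ℝ 2 v)
    (hupos : ∀ x, 0 < u x) (hvpos : ∀ x, 0 < v x)
    (huv : ∀ x, v x = ∫ s in Set.Ioo (0 : ℝ) (u x), Real.exp (s ^ (p + 1) / (p + 1)))
    (hsub : ∀ x, euclideanLaplacian v x ≤ 0) :
    ∀ x, euclideanLaplacian u x + u x ^ p * ‖gradient u x‖ ^ (2 : ℝ) ≤ 0 :=
  change_of_variable_superharmonic_general n p hp u v hu hupos huv hsub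
end

section
/- (Radial supersolution near infinity, region G_1; Step 1 of the proof of Theorem 1.5 (A)) Let m > 1, p ≥ 0, q < m, p + q > m − 1, set α = (mp+q)/(p+q−m+1), let β > (m−1)/(p+q−m+1), c > 0, and define S(r) = c·r^{α−1}·(ln r)^β for r > 1. Fix η with 0 < η < β − (m−1)/(p+q−m+1) and define u(r) = ∫_r^∞ S(s)^{−1/(m−1)} (ln s)^{η/(m−1)} ds. Then: (i) since (α−1)/(m−1) = (p+1)/(p+q−m+1) > 1, the integral converges for every r > 1, so u is well defined and positive; (ii) u is differentiable with u'(r) = −S(r)^{−1/(m−1)}(ln r)^{η/(m−1)} < 0 and S(r)·|u'(r)|^{m−2}·u'(r) = −(ln r)^η; (iii) there exists R₀ > 1 such that for all r ≥ R₀, the radial inequality (S·|u'|^{m−2}·u')'(r) + S(r)·u(r)^p·|u'(r)|^q ≤ 0 holds. -/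
/-!
With `A = (p + 1) / (p + q - m + 1) > 1` and `B = (β - η) / (m - 1) > 0`, the integrand defining
`u` is `c ^ (-1 / (m - 1)) * s ^ (-A) * (log s) ^ (-B)`, so `u` is a constant multiple of the tail
integral of a power-log function: it converges, is positive, is bounded by a multiple of
`r ^ (1 - A) * (log r) ^ (-B)`, and has derivative minus the integrand. The weighted flux
`S |u'| ^ (m - 2) u'` is then `-(log r) ^ η`, with derivative `-η r⁻¹ (log r) ^ (η - 1)`. The
exponents of `r` in `S u ^ p |u'| ^ q` add up to `-1`, and its power of `log r` is
`β - B (p + q)`, which is below `η - 1` exactly when `η < β - (m - 1) / (p + q - m + 1)`;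
so the flux derivative dominates for large `r`.
-/

open MeasureTheory Real Set Filter Topology

theorem hasDerivAt_integral_Ioi {E : Type*} [NormedAddCommGroup E] [NormedSpace ℝ E]
    [CompleteSpace E] {f : ℝ → E} {a x : ℝ} (hf : ContinuousOn f (Ioi a))
    (hfi : ∀ r, a < r → IntegrableOn f (Ioi r)) (hx : a < x) :
    HasDerivAt (fun r => ∫ s in Ioi r, f s) (-f x) x := by
  obtain ⟨y, hay, hyx⟩ := exists_between hx
  have hFTC : HasDerivAt (fun z => ∫ s in y..z, f s) (f x) x :=
    intervalIntegral.integral_hasDerivAt_right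
      (ContinuousOn.intervalIntegrable_of_Icc hyx.le
        (hf.mono ((Icc_subset_Ioi_iff hyx.le).2 hay)))
      (hf.stronglyMeasurableAtFilter isOpen_Ioi x hx) (hf.continuousAt (Ioi_mem_nhds hx))
  refine (hFTC.const_sub (∫ s in Ioi y, f s)).congr_of_eventuallyEq ?_
  filter_upwards [Ioi_mem_nhds hx] with z hz
  rw [← intervalIntegral.integral_Ioi_sub_Ioi' (hfi y hay) (hfi z hz), sub_sub_cancel]

theorem setIntegral_pos_of_forall_pos {α : Type*} [MeasurableSpace α] {μ : Measure α}
    {f : α → ℝ} {s : Set α} (hs : MeasurableSet s) (hμs : μ s ≠ 0) (hf : ∀ x ∈ s, 0 < f x)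
    (hfi : IntegrableOn f s μ) : 0 < ∫ x in s, f x ∂μ := by
  have hnn : 0 ≤ᵐ[μ.restrict s] f := (ae_restrict_mem hs).mono fun x hx => (hf x hx).le
  have hsupp : Function.support f ∩ s = s := inter_eq_right.2 fun x hx => (hf x hx).ne'
  rw [setIntegral_pos_iff_support_of_nonneg_ae hnn hfi, hsupp]
  exact pos_iff_ne_zero.2 hμs

section PowerLog

variable {A B r : ℝ}

theorem continuousOn_rpow_neg_mul_log_rpow_neg :
    ContinuousOn (fun s => s ^ (-A) * log s ^ (-B)) (Ioi 1) := fun s hs =>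
  ((continuousAt_rpow_const s (-A) (Or.inl (by linarith [mem_Ioi.1 hs]))).mul
    ((continuousAt_log (by linarith [mem_Ioi.1 hs])).rpow_const
      (Or.inl (log_pos hs).ne'))).continuousWithinAt

theorem rpow_neg_mul_log_rpow_neg_le (hB : 0 ≤ B) (hr : 1 < r) {s : ℝ} (hrs : r ≤ s) :
    s ^ (-A) * log s ^ (-B) ≤ log r ^ (-B) * s ^ (-A) := by
  rw [mul_comm]
  exact mul_le_mul_of_nonneg_right
    (rpow_le_rpow_of_nonpos (log_pos hr) (log_le_log (by linarith) hrs) (by linarith))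
    (rpow_nonneg (by linarith) _)

theorem integrableOn_Ioi_rpow_neg_mul_log_rpow_neg (hA : 1 < A) (hB : 0 ≤ B) (hr : 1 < r) :
    IntegrableOn (fun s => s ^ (-A) * log s ^ (-B)) (Ioi r) := by
  have hpow := integrableOn_Ioi_rpow_of_lt (a := -A) (by linarith) (by linarith : 0 < r)
  refine (hpow.const_mul (log r ^ (-B))).mono'
    ((continuousOn_rpow_neg_mul_log_rpow_neg.mono (Ioi_subset_Ioi hr.le)).aestronglyMeasurable
      measurableSet_Ioi) ?_
  filter_upwards [ae_restrict_mem measurableSet_Ioi] with s hs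
  have hs1 : 1 < s := hr.trans hs
  rw [norm_of_nonneg (mul_nonneg (rpow_nonneg (by linarith) _) (rpow_nonneg (log_pos hs1).le _))]
  exact rpow_neg_mul_log_rpow_neg_le hB hr hs.le

noncomputable def powerLogTail (A B r : ℝ) : ℝ := ∫ s in Ioi r, s ^ (-A) * log s ^ (-B)

theorem powerLogTail_pos (hA : 1 < A) (hB : 0 ≤ B) (hr : 1 < r) : 0 < powerLogTail A B r := by
  refine setIntegral_pos_of_forall_pos measurableSet_Ioi (by simp) (fun s hs => ?_)
    (integrableOn_Ioi_rpow_neg_mul_log_rpow_neg hA hB hr)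
  have hs1 : 1 < s := hr.trans hs
  have := log_pos hs1
  positivity

theorem powerLogTail_le (hA : 1 < A) (hB : 0 ≤ B) (hr : 1 < r) :
    powerLogTail A B r ≤ (A - 1)⁻¹ * (r ^ (1 - A) * log r ^ (-B)) := by
  have hpow := integrableOn_Ioi_rpow_of_lt (a := -A) (by linarith) (by linarith : 0 < r)
  calc powerLogTail A B r ≤ ∫ s in Ioi r, log r ^ (-B) * s ^ (-A) :=
        setIntegral_mono_on (integrableOn_Ioi_rpow_neg_mul_log_rpow_neg hA hB hr)
          (hpow.const_mul _) measurableSet_Ioi fun s hs => rpow_neg_mul_log_rpow_neg_le hB hr hs.le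
    _ = (A - 1)⁻¹ * (r ^ (1 - A) * log r ^ (-B)) := by
        rw [integral_const_mul, integral_Ioi_rpow_of_lt (by linarith) (by linarith),
          show -A + 1 = 1 - A by ring, neg_div, ← div_neg, neg_sub]
        ring

theorem hasDerivAt_powerLogTail (hA : 1 < A) (hB : 0 ≤ B) (hr : 1 < r) :
    HasDerivAt (powerLogTail A B) (-(r ^ (-A) * log r ^ (-B))) r :=
  hasDerivAt_integral_Ioi continuousOn_rpow_neg_mul_log_rpow_neg
    (fun _ hr' => integrableOn_Ioi_rpow_neg_mul_log_rpow_neg hA hB hr') hr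

theorem hasDerivAt_of_eq_const_mul_powerLogTail {C : ℝ} {u : ℝ → ℝ} (hA : 1 < A) (hB : 0 ≤ B)
    (hu : ∀ t, 1 < t → u t = C * powerLogTail A B t) (hr : 1 < r) :
    HasDerivAt u (-(C * (r ^ (-A) * log r ^ (-B)))) r := by
  rw [← mul_neg]
  refine ((hasDerivAt_powerLogTail hA hB hr).const_mul C).congr_of_eventuallyEq ?_
  filter_upwards [Ioi_mem_nhds hr] with t ht using hu t ht

end PowerLog

theorem eventually_mul_log_rpow_le {M E η : ℝ} (hη : 0 < η) (hE : E < η - 1) :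
    ∀ᶠ r in atTop, M * log r ^ E ≤ η * log r ^ (η - 1) := by
  have hgrow : Tendsto (fun r => log r ^ (η - 1 - E)) atTop atTop :=
    (tendsto_rpow_atTop (by linarith)).comp tendsto_log_atTop
  filter_upwards [hgrow.eventually_ge_atTop (M / η), tendsto_log_atTop.eventually_gt_atTop 0]
    with r hMr hlog
  calc M * log r ^ E ≤ η * log r ^ (η - 1 - E) * log r ^ E := by
        refine mul_le_mul_of_nonneg_right ?_ (rpow_nonneg hlog.le _)
        rwa [← div_le_iff₀' hη]
    _ = η * log r ^ (η - 1) := by rw [mul_assoc, ← rpow_add hlog, sub_add_cancel]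

theorem mul_rpow_mul_rpow_rpow_neg_one_div {k c s L A β η : ℝ} (hk : k ≠ 0) (hc : 0 < c)
    (hs : 0 < s) (hL : 0 < L) :
    (c * s ^ (k * A) * L ^ β) ^ (-(1 / k)) * L ^ (η / k) =
      c ^ (-(1 / k)) * (s ^ (-A) * L ^ (-((β - η) / k))) := by
  have hsA : k * A * -(1 / k) = -A := by field_simp
  have hLB : β * -(1 / k) + η / k = -((β - η) / k) := by field_simp; ring
  rw [mul_rpow (by positivity) (by positivity), mul_rpow hc.le (by positivity),
    ← rpow_mul hs.le, ← rpow_mul hL.le, mul_assoc, mul_assoc, ← rpow_add hL, hsA, hLB]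

theorem mul_abs_rpow_sub_two_mul_neg_eq {m S L η : ℝ} (hm : m ≠ 1) (hS : 0 < S) (hL : 0 < L) :
    S * |-(S ^ (-(1 / (m - 1))) * L ^ (η / (m - 1)))| ^ (m - 2) *
      -(S ^ (-(1 / (m - 1))) * L ^ (η / (m - 1))) = -(L ^ η) := by
  have hm1 : m - 1 ≠ 0 := sub_ne_zero.2 hm
  set x := S ^ (-(1 / (m - 1))) * L ^ (η / (m - 1))
  have hx : 0 < x := by positivity
  have hxm : x ^ (m - 1) = S⁻¹ * L ^ η := by
    rw [mul_rpow (by positivity) (by positivity), ← rpow_mul hS.le, ← rpow_mul hL.le,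
      show -(1 / (m - 1)) * (m - 1) = -1 by field_simp, div_mul_cancel₀ η hm1, rpow_neg_one]
  calc S * |-x| ^ (m - 2) * -x = -(S * (x ^ (m - 2) * x ^ (1 : ℝ))) := by
        rw [abs_neg, abs_of_pos hx, rpow_one]; ring
    _ = -(L ^ η) := by rw [← rpow_add hx, show m - 2 + 1 = m - 1 by ring, hxm]; field_simp

theorem mul_rpow_mul_rpow_le {k p q A B β c K C r L v : ℝ} (hp : 0 ≤ p) (hc : 0 ≤ c)
    (hK : 0 ≤ K) (hC : 0 ≤ C) (hr : 0 < r) (hL : 0 < L) (hv : 0 ≤ v)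
    (hvK : v ≤ K * (r ^ (1 - A) * L ^ (-B))) :
    c * r ^ (k * A) * L ^ β * v ^ p * (C * (r ^ (-A) * L ^ (-B))) ^ q ≤
      c * K ^ p * C ^ q * r ^ (k * A + (1 - A) * p - A * q) * L ^ (β - B * (p + q)) := by
  calc c * r ^ (k * A) * L ^ β * v ^ p * (C * (r ^ (-A) * L ^ (-B))) ^ q
      ≤ c * r ^ (k * A) * L ^ β * (K * (r ^ (1 - A) * L ^ (-B))) ^ p *
          (C * (r ^ (-A) * L ^ (-B))) ^ q := by gcongr
    _ = c * K ^ p * C ^ q * r ^ (k * A + (1 - A) * p - A * q) * L ^ (β - B * (p + q)) := by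
      rw [mul_rpow hK (by positivity), mul_rpow hC (by positivity),
        mul_rpow (by positivity) (by positivity), mul_rpow (by positivity) (by positivity),
        ← rpow_mul hr.le, ← rpow_mul hr.le, ← rpow_mul hL.le, ← rpow_mul hL.le]
      rw [show k * A + (1 - A) * p - A * q = k * A + (1 - A) * p + -A * q by ring,
        show β - B * (p + q) = β + -B * p + -B * q by ring, rpow_add hr, rpow_add hr,
        rpow_add hL, rpow_add hL]
      ring

theorem exists_radial_supersolution_of_eq_powerLogTail {m p q A B β η c C : ℝ}
    {S u : ℝ → ℝ} (hp : 0 ≤ p) (hη : 0 < η) (hc : 0 ≤ c) (hC : 0 ≤ C) (hA : 1 < A)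
    (hB : 0 ≤ B)
    (hexp : (m - 1) * A + (1 - A) * p - A * q = -1) (hE : β - B * (p + q) < η - 1)
    (hS : ∀ r, 1 < r → S r = c * r ^ ((m - 1) * A) * log r ^ β)
    (hu : ∀ r, 1 < r → u r = C * powerLogTail A B r)
    (hflux : ∀ r, 1 < r → S r * |deriv u r| ^ (m - 2) * deriv u r = -(log r ^ η)) :
    ∃ R₀ : ℝ, 1 < R₀ ∧ ∀ r : ℝ, R₀ ≤ r →
      DifferentiableAt ℝ (fun t => S t * |deriv u t| ^ (m - 2) * deriv u t) r ∧
      deriv (fun t => S t * |deriv u t| ^ (m - 2) * deriv u t) r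
        + S r * u r ^ p * |deriv u r| ^ q ≤ 0 := by
  set K := C * (A - 1)⁻¹
  obtain ⟨R, hR⟩ :=
    eventually_atTop.1 (eventually_mul_log_rpow_le (M := c * K ^ p * C ^ q) hη hE)
  refine ⟨max R 2, lt_max_of_lt_right one_lt_two, fun r hr => ?_⟩
  have hr1 : 1 < r := by linarith [le_max_right R 2]
  have hlog : 0 < log r := log_pos hr1
  have hflux' : HasDerivAt (fun t => S t * |deriv u t| ^ (m - 2) * deriv u t)
      (-(r⁻¹ * η * log r ^ (η - 1))) r := by
    refine ((hasDerivAt_log (by positivity)).rpow_const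
      (Or.inl hlog.ne')).neg.congr_of_eventuallyEq ?_
    filter_upwards [Ioi_mem_nhds hr1] with t ht using hflux t ht
  refine ⟨hflux'.differentiableAt, ?_⟩
  have hu_le : u r ≤ K * (r ^ (1 - A) * log r ^ (-B)) := by
    rw [hu r hr1, mul_assoc]
    exact mul_le_mul_of_nonneg_left (powerLogTail_le hA hB hr1) hC
  have hbound := mul_rpow_mul_rpow_le (k := m - 1) (q := q) (β := β) hp hc
    (by positivity) hC (by positivity) hlog
    (by rw [hu r hr1]; exact mul_nonneg hC (powerLogTail_pos hA hB hr1).le) hu_le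
  rw [hexp, rpow_neg_one] at hbound
  rw [hflux'.deriv, hS r hr1, (hasDerivAt_of_eq_const_mul_powerLogTail hA hB hu hr1).deriv,
    abs_neg, abs_of_nonneg (by positivity)]
  have hlarge := hR r ((le_max_left R 2).trans hr)
  linarith [mul_le_mul_of_nonneg_left hlarge (inv_nonneg.2 (by positivity : (0 : ℝ) ≤ r))]

theorem radial_supersolution_near_infinity_G1_general
    (m p q α β c η : ℝ)
    (hm : 1 < m) (hp : 0 ≤ p) (hq : q < m) (hpq : m - 1 < p + q)
    (hα : α = (m * p + q) / (p + q - m + 1))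
    (hc : 0 < c)
    (hη1 : 0 < η) (hη2 : η < β - (m - 1) / (p + q - m + 1))
    (S u : ℝ → ℝ)
    (hS : ∀ r : ℝ, 1 < r → S r = c * r ^ (α - 1) * Real.log r ^ β)
    (hu : ∀ r : ℝ, 1 < r →
      u r = ∫ s in Set.Ioi r, S s ^ (-(1 / (m - 1))) * Real.log s ^ (η / (m - 1))) :
    -- (i) convergence of the integral and positivity of u
    ((α - 1) / (m - 1) = (p + 1) / (p + q - m + 1) ∧
      1 < (p + 1) / (p + q - m + 1) ∧
      (∀ r : ℝ, 1 < r →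
        IntegrableOn (fun s => S s ^ (-(1 / (m - 1))) * Real.log s ^ (η / (m - 1)))
          (Set.Ioi r) ∧ 0 < u r)) ∧
    -- (ii) derivative of u and the weighted derivative identity
    (∀ r : ℝ, 1 < r →
      HasDerivAt u (-(S r ^ (-(1 / (m - 1))) * Real.log r ^ (η / (m - 1)))) r ∧
      deriv u r < 0 ∧
      S r * |deriv u r| ^ (m - 2) * deriv u r = -(Real.log r ^ η)) ∧
    -- (iii) the radial differential inequality for large r
    (∃ R₀ : ℝ, 1 < R₀ ∧ ∀ r : ℝ, R₀ ≤ r →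
      DifferentiableAt ℝ (fun t => S t * |deriv u t| ^ (m - 2) * deriv u t) r ∧
      deriv (fun t => S t * |deriv u t| ^ (m - 2) * deriv u t) r
        + S r * u r ^ p * |deriv u r| ^ q ≤ 0) := by
  have hk : 0 < m - 1 := by linarith
  have hd : 0 < p + q - m + 1 := by linarith
  set A := (p + 1) / (p + q - m + 1) with hA_def
  set B := (β - η) / (m - 1) with hB_def
  set C := c ^ (-(1 / (m - 1)))
  have hA : 1 < A := by rw [lt_div_iff₀ hd]; linarith
  have hB : 0 < B := div_pos (by linarith [div_pos hk hd]) hk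
  have hαA : α - 1 = (m - 1) * A := by rw [hα, hA_def]; field_simp; ring
  have hS' : ∀ r, 1 < r → S r = c * r ^ ((m - 1) * A) * log r ^ β := fun r hr => hαA ▸ hS r hr
  have hf : ∀ s, 1 < s → S s ^ (-(1 / (m - 1))) * log s ^ (η / (m - 1)) =
      C * (s ^ (-A) * log s ^ (-B)) := fun s hs => by
    rw [hS' s hs]
    exact mul_rpow_mul_rpow_rpow_neg_one_div hk.ne' hc (by linarith) (log_pos hs)
  have hu' : ∀ r, 1 < r → u r = C * powerLogTail A B r := fun r hr => by
    rw [hu r hr, powerLogTail, ← integral_const_mul]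
    exact setIntegral_congr_fun measurableSet_Ioi fun s hs => hf s (hr.trans hs)
  have hderiv : ∀ r, 1 < r → HasDerivAt u (-(C * (r ^ (-A) * log r ^ (-B)))) r :=
    fun r hr => hasDerivAt_of_eq_const_mul_powerLogTail hA hB.le hu' hr
  have hexp : (m - 1) * A + (1 - A) * p - A * q = -1 := by rw [hA_def]; field_simp; ring
  have hE : β - B * (p + q) < η - 1 := by
    have hBd : 1 < B * (p + q - m + 1) := by
      rw [hB_def, div_mul_eq_mul_div, one_lt_div hk, ← div_lt_iff₀ hd]; linarith
    have hBk : B * (m - 1) = β - η := div_mul_cancel₀ _ hk.ne'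
    linarith
  have hflux : ∀ r, 1 < r → S r * |deriv u r| ^ (m - 2) * deriv u r = -(log r ^ η) :=
    fun r hr => by
    have := log_pos hr
    rw [(hderiv r hr).deriv, ← hf r hr]
    exact mul_abs_rpow_sub_two_mul_neg_eq hm.ne' (by rw [hS' r hr]; positivity) this
  have hupos : ∀ r, 1 < r → 0 < u r := fun r hr => by
    rw [hu' r hr]; exact mul_pos (by positivity) (powerLogTail_pos hA hB.le hr)
  refine ⟨⟨by rw [hαA]; field_simp, hA, fun r hr => ⟨?_, hupos r hr⟩⟩,
    fun r hr => ⟨by rw [hf r hr]; exact hderiv r hr, ?_, hflux r hr⟩, ?_⟩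
  · exact IntegrableOn.congr_fun
      ((integrableOn_Ioi_rpow_neg_mul_log_rpow_neg hA hB.le hr).const_mul C)
      (fun s hs => (hf s (hr.trans hs)).symm) measurableSet_Ioi
  · have := log_pos hr
    rw [(hderiv r hr).deriv]
    exact neg_neg_of_pos (by positivity)
  · exact exists_radial_supersolution_of_eq_powerLogTail hp hη1 hc.le (by positivity) hA hB.le
      hexp hE hS' hu' hflux

/-- Radial supersolution near infinity, region `G₁`
(Step 1 of the proof of Theorem 1.5 (A)). -/
theorem radial_supersolution_near_infinity_G1
    (m p q α β c η : ℝ)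
    (hm : 1 < m) (hp : 0 ≤ p) (hq : q < m) (hpq : m - 1 < p + q)
    (hα : α = (m * p + q) / (p + q - m + 1))
    (hβ : (m - 1) / (p + q - m + 1) < β) (hc : 0 < c)
    (hη1 : 0 < η) (hη2 : η < β - (m - 1) / (p + q - m + 1))
    (S u : ℝ → ℝ)
    (hS : ∀ r : ℝ, 1 < r → S r = c * r ^ (α - 1) * Real.log r ^ β)
    (hu : ∀ r : ℝ, 1 < r →
      u r = ∫ s in Set.Ioi r, S s ^ (-(1 / (m - 1))) * Real.log s ^ (η / (m - 1))) :
    -- (i) convergence of the integral and positivity of u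
    ((α - 1) / (m - 1) = (p + 1) / (p + q - m + 1) ∧
      1 < (p + 1) / (p + q - m + 1) ∧
      (∀ r : ℝ, 1 < r →
        IntegrableOn (fun s => S s ^ (-(1 / (m - 1))) * Real.log s ^ (η / (m - 1)))
          (Set.Ioi r) ∧ 0 < u r)) ∧
    -- (ii) derivative of u and the weighted derivative identity
    (∀ r : ℝ, 1 < r →
      HasDerivAt u (-(S r ^ (-(1 / (m - 1))) * Real.log r ^ (η / (m - 1)))) r ∧
      deriv u r < 0 ∧
      S r * |deriv u r| ^ (m - 2) * deriv u r = -(Real.log r ^ η)) ∧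
    -- (iii) the radial differential inequality for large r
    (∃ R₀ : ℝ, 1 < R₀ ∧ ∀ r : ℝ, R₀ ≤ r →
      DifferentiableAt ℝ (fun t => S t * |deriv u t| ^ (m - 2) * deriv u t) r ∧
      deriv (fun t => S t * |deriv u t| ^ (m - 2) * deriv u t) r
        + S r * u r ^ p * |deriv u r| ^ q ≤ 0) :=
  radial_supersolution_near_infinity_G1_general m p q α β c η hm hp hq hpq hα hc hη1 hη2 S u hS hu
end

section
/- (Radial supersolution near infinity, region G_2 with q > m; Step 1 of the proof of Theorem 1.5 (B)) Let m > 1, q > m, p ∈ ℝ, β > m − 1, c > 0, and define S(r) = c·r^{m−1}·(ln r)^β for r > 1. Fix η with 0 < η < β − (m − 1) and define u(r) = (ln r)^{−η/(m−1)}. Then there exists R₀ > 1 such that for all r ≥ R₀, u'(r) < 0 and the radial inequality (S·|u'|^{m−2}·u')'(r) + S(r)·u(r)^p·|u'(r)|^q ≤ 0 holds. -/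
/-!
With `k = η / (m - 1)` the flux `S |u'|^(m-2) u'` is exactly `-c k^(m-1) (log r)^α` with
`α = β - (k + 1)(m - 1) > 0`, so its derivative is `-c k^(m-1) α (log r)^(α-1) / r`.
The source term `S u^p |u'|^q` is a constant times `r^(m-1-q) (log r)^γ`, which is
`o((log r)^(α-1) / r)` because `q > m`; so the sum is negative for large `r`.
-/

open Real Filter Asymptotics

noncomputable def radialFlux (m : ℝ) (S u : ℝ → ℝ) (t : ℝ) : ℝ :=
  S t * |deriv u t| ^ (m - 2) * deriv u t

theorem hasDerivAt_log_rpow (a : ℝ) {t : ℝ} (ht : log t ≠ 0) :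
    HasDerivAt (fun s => log s ^ a) (a * log t ^ (a - 1) * t⁻¹) t :=
  (hasDerivAt_rpow_const (Or.inl ht)).comp t (hasDerivAt_log fun h => ht (by simp [h]))

theorem hasDerivAt_of_eq_const_mul_log_rpow {f : ℝ → ℝ} {C a t : ℝ}
    (hf : ∀ r, 1 < r → f r = C * log r ^ a) (ht : 1 < t) :
    HasDerivAt f (C * (a * log t ^ (a - 1) * t⁻¹)) t :=
  ((hasDerivAt_log_rpow a (log_pos ht).ne').const_mul C).congr_of_eventuallyEq
    ((eventually_gt_nhds ht).mono hf)

theorem isLittleO_rpow_mul_log_rpow {a b : ℝ} (hab : a < b) (γ δ : ℝ) :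
    (fun t => t ^ a * log t ^ γ) =o[atTop] fun t => t ^ b * log t ^ δ := by
  have h := (isLittleO_log_rpow_rpow_atTop (γ - δ) (sub_pos.2 hab)).mul_isBigO
    (isBigO_refl (fun t => t ^ a * log t ^ δ) atTop)
  refine h.congr' ?_ ?_
  all_goals
    filter_upwards [eventually_gt_atTop 1] with t ht
    have hL := log_pos ht
    have ht0 : 0 < t := by linarith
  · rw [mul_left_comm, ← rpow_add hL, sub_add_cancel]
  · rw [← mul_assoc, ← rpow_add ht0, sub_add_cancel]

section

variable {m p q β c k t : ℝ} {S u : ℝ → ℝ}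

theorem deriv_eq_of_eq_log_rpow_neg (hu : ∀ r, 1 < r → u r = log r ^ (-k)) (ht : 1 < t) :
    deriv u t = -(k * log t ^ (-k - 1) * t⁻¹) := by
  have hu' : ∀ r, 1 < r → u r = 1 * log r ^ (-k) := fun r hr => by rw [one_mul, hu r hr]
  rw [(hasDerivAt_of_eq_const_mul_log_rpow hu' ht).deriv]
  ring

theorem rpow_mul_log_rpow_mul_inv (hk : 0 ≤ k) (ht : 1 ≤ t) (a e : ℝ) :
    (k * log t ^ a * t⁻¹) ^ e = k ^ e * log t ^ (a * e) * (t ^ e)⁻¹ := by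
  have hL := log_nonneg ht
  have ht0 : 0 ≤ t := by linarith
  rw [mul_rpow (by positivity) (by positivity), mul_rpow hk (by positivity), ← rpow_mul hL,
    inv_rpow ht0]

theorem radialFlux_eq_const_mul_log_rpow (hk : 0 < k)
    (hS : ∀ r, 1 < r → S r = c * r ^ (m - 1) * log r ^ β)
    (hu : ∀ r, 1 < r → u r = log r ^ (-k)) (ht : 1 < t) :
    radialFlux m S u t = -(c * k ^ (m - 1)) * log t ^ (β - (k + 1) * (m - 1)) := by
  have hL := log_pos ht
  have ht0 : 0 < t := by linarith
  have hy : 0 < k * log t ^ (-k - 1) * t⁻¹ := by positivity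
  have hsign : ∀ y : ℝ, 0 < y → |-y| ^ (m - 2) * -y = -(y ^ (m - 1)) := fun y hy => by
    rw [abs_neg, abs_of_pos hy, mul_neg, ← rpow_add_one hy.ne', show m - 2 + 1 = m - 1 by ring]
  rw [radialFlux, hS t ht, deriv_eq_of_eq_log_rpow_neg hu ht, mul_assoc, hsign _ hy,
    rpow_mul_log_rpow_mul_inv hk.le ht.le,
    show β - (k + 1) * (m - 1) = β + (-k - 1) * (m - 1) by ring, rpow_add hL]
  field_simp

theorem source_eq_rpow_mul_log_rpow (hk : 0 < k)
    (hS : ∀ r, 1 < r → S r = c * r ^ (m - 1) * log r ^ β)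
    (hu : ∀ r, 1 < r → u r = log r ^ (-k)) (ht : 1 < t) :
    S t * u t ^ p * |deriv u t| ^ q
      = c * k ^ q * (t ^ (m - 1 - q) * log t ^ (β - k * p - (k + 1) * q)) := by
  have hL := log_pos ht
  have ht0 : 0 < t := by linarith
  have hy : 0 < k * log t ^ (-k - 1) * t⁻¹ := by positivity
  rw [hS t ht, hu t ht, deriv_eq_of_eq_log_rpow_neg hu ht, abs_neg, abs_of_pos hy,
    rpow_mul_log_rpow_mul_inv hk.le ht.le, ← rpow_mul hL.le, rpow_sub ht0 (m - 1) q,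
    show β - k * p - (k + 1) * q = β + -k * p + (-k - 1) * q by ring, rpow_add hL, rpow_add hL]
  field_simp

theorem exists_radialFlux_supersolution_log_rpow_neg (hk : 0 < k) (hα : (k + 1) * (m - 1) < β)
    (hq : m < q) (hc : 0 < c) (hS : ∀ r, 1 < r → S r = c * r ^ (m - 1) * log r ^ β)
    (hu : ∀ r, 1 < r → u r = log r ^ (-k)) :
    ∃ R₀ : ℝ, 1 < R₀ ∧ ∀ r : ℝ, R₀ ≤ r →
      deriv u r < 0 ∧ DifferentiableAt ℝ (radialFlux m S u) r ∧
      deriv (radialFlux m S u) r + S r * u r ^ p * |deriv u r| ^ q ≤ 0 := by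
  set α := β - (k + 1) * (m - 1)
  set γ := β - k * p - (k + 1) * q
  have hflux : ∀ r, 1 < r → HasDerivAt (radialFlux m S u)
      (-(c * k ^ (m - 1)) * (α * log r ^ (α - 1) * r⁻¹)) r := fun r hr =>
    hasDerivAt_of_eq_const_mul_log_rpow
      (fun s hs => radialFlux_eq_const_mul_log_rpow hk hS hu hs) hr
  obtain ⟨R, hR⟩ := eventually_atTop.1
    ((isLittleO_rpow_mul_log_rpow (by linarith : m - 1 - q < -1) γ (α - 1)).bound
      (by positivity : 0 < α * k ^ (m - 1) / k ^ q))
  refine ⟨max R 2, by simp, fun r hr => ?_⟩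
  have hr1 : 1 < r := by linarith [le_max_right R 2]
  have hL := log_pos hr1
  have hr0 : 0 < r := by linarith
  refine ⟨?_, (hflux r hr1).differentiableAt, ?_⟩
  · rw [deriv_eq_of_eq_log_rpow_neg hu hr1, neg_lt_zero]
    positivity
  · have hbound := hR r (le_of_max_le_left hr)
    rw [norm_of_nonneg (by positivity), norm_of_nonneg (by positivity), rpow_neg_one] at hbound
    rw [(hflux r hr1).deriv, source_eq_rpow_mul_log_rpow hk hS hu hr1]
    calc -(c * k ^ (m - 1)) * (α * log r ^ (α - 1) * r⁻¹)
          + c * k ^ q * (r ^ (m - 1 - q) * log r ^ γ)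
        ≤ -(c * k ^ (m - 1)) * (α * log r ^ (α - 1) * r⁻¹)
          + c * k ^ q * (α * k ^ (m - 1) / k ^ q * (r⁻¹ * log r ^ (α - 1))) := by gcongr
      _ = 0 := by field_simp; ring

end

theorem radial_supersolution_near_infinity_G2_general
    (m p q β c η : ℝ)
    (hm : 1 < m) (hq : m < q) (hc : 0 < c)
    (hη1 : 0 < η) (hη2 : η < β - (m - 1))
    (S u : ℝ → ℝ)
    (hS : ∀ r : ℝ, 1 < r → S r = c * r ^ (m - 1) * Real.log r ^ β)
    (hu : ∀ r : ℝ, 1 < r → u r = Real.log r ^ (-(η / (m - 1)))) :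
    ∃ R₀ : ℝ, 1 < R₀ ∧ ∀ r : ℝ, R₀ ≤ r →
      deriv u r < 0 ∧
      DifferentiableAt ℝ (fun t => S t * |deriv u t| ^ (m - 2) * deriv u t) r ∧
      deriv (fun t => S t * |deriv u t| ^ (m - 2) * deriv u t) r
        + S r * u r ^ p * |deriv u r| ^ q ≤ 0 := by
  have hm1 : 0 < m - 1 := by linarith
  have hflux_exponent : (η / (m - 1) + 1) * (m - 1) < β := by
    rw [add_mul, div_mul_cancel₀ η hm1.ne']
    linarith
  exact exists_radialFlux_supersolution_log_rpow_neg (div_pos hη1 hm1) hflux_exponent hq hc hS hu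

/-- Radial supersolution near infinity, region `G₂` with `q > m`
(Step 1 of the proof of Theorem 1.5 (B)). -/
theorem radial_supersolution_near_infinity_G2
    (m p q β c η : ℝ)
    (hm : 1 < m) (hq : m < q) (hβ : m - 1 < β) (hc : 0 < c)
    (hη1 : 0 < η) (hη2 : η < β - (m - 1))
    (S u : ℝ → ℝ)
    (hS : ∀ r : ℝ, 1 < r → S r = c * r ^ (m - 1) * Real.log r ^ β)
    (hu : ∀ r : ℝ, 1 < r → u r = Real.log r ^ (-(η / (m - 1)))) :
    ∃ R₀ : ℝ, 1 < R₀ ∧ ∀ r : ℝ, R₀ ≤ r →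
      deriv u r < 0 ∧
      DifferentiableAt ℝ (fun t => S t * |deriv u t| ^ (m - 2) * deriv u t) r ∧
      deriv (fun t => S t * |deriv u t| ^ (m - 2) * deriv u t) r
        + S r * u r ^ p * |deriv u r| ^ q ≤ 0 :=
  radial_supersolution_near_infinity_G2_general m p q β c η hm hq hc hη1 hη2 S u hS hu
end

section
/- (Radial supersolution near the origin; Step 2 of the proof of Theorem 1.5 (A)) Let m > 1, p ≥ 0, q ∈ ℝ, and let θ > 0 satisfy θ·(m − 1 − q) < 1. Let ρ > 0 and let S be a differentiable function on (0, ρ) with S > 0 and S' ≥ 0 there. Set A = (∫_0^ρ (1 − e^{−x/ρ})^θ dx)^{−1} and u(r) = A·∫_r^ρ (1 − e^{−x/ρ})^θ dx for r ∈ [0, ρ], so that u(0) = 1 and 0 ≤ u ≤ 1. Then for every λ with 0 < λ ≤ e^{−1}·θ·(m−1)·A^{m−1−q}·(1 − e^{−1})^{θ(m−1−q)−1}/ρ, the radial inequality (S·|u'|^{m−2}·u')'(r) + λ·S(r)·u(r)^p·|u'(r)|^q ≤ 0 holds for all r ∈ (0, ρ). -/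
open MeasureTheory Real Set Filter Topology

/-! The profile `u` is decreasing with `u' = -A g`, `g x = (1 - e^{-x/ρ})^θ`, so the flux is
`-S (A g)^{m-1}` and its derivative is `-S' (A g)^{m-1} - (m-1) S (A g)^{m-2} A g'`. The first term
is `≤ 0` because `S' ≥ 0`; the second dominates `λ S u^p (A g)^q` because `u^p ≤ 1` and, writing
`b = 1 - e^{-r/ρ}`, the quotient `(m-1)(A g)^{m-2} A g' / (A g)^q` equals
`θ (m-1) A^{m-1-q} b^{θ(m-1-q)-1} e^{-r/ρ} / ρ`, which on `(0, ρ)` is at least its value at `r = ρ` because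
`b ≤ 1 - e^{-1}`, `e^{-r/ρ} ≥ e^{-1}` and `θ(m-1-q) - 1 ≤ 0`. -/

def RadialSupersolutionAt (m p q l : ℝ) (S u : ℝ → ℝ) (r : ℝ) : Prop :=
  DifferentiableAt ℝ (fun t => S t * |deriv u t| ^ (m - 2) * deriv u t) r ∧
    deriv (fun t => S t * |deriv u t| ^ (m - 2) * deriv u t) r
      + l * S r * u r ^ p * |deriv u r| ^ q ≤ 0

section RadialFlux

variable {S u v : ℝ → ℝ} {m r S' v' : ℝ}

theorem hasDerivAt_radialFlux_of_deriv_eq_neg (huv : ∀ᶠ t in 𝓝 r, deriv u t = -v t ∧ 0 < v t)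
    (hS : HasDerivAt S S' r) (hv : HasDerivAt v v' r) :
    HasDerivAt (fun t => S t * |deriv u t| ^ (m - 2) * deriv u t)
      (-(S' * v r ^ (m - 1) + S r * ((m - 1) * v r ^ (m - 2) * v'))) r := by
  have hvr : 0 < v r := huv.self_of_nhds.2
  have hflux : (fun t => S t * |deriv u t| ^ (m - 2) * deriv u t)
      =ᶠ[𝓝 r] fun t => -(S t * v t ^ (m - 1)) := by
    filter_upwards [huv] with t ⟨hdu, hpos⟩
    have hpow : v t ^ (m - 1) = v t ^ (m - 2) * v t := by
      rw [← rpow_add_one hpos.ne']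
      ring_nf
    rw [hdu, abs_neg, abs_of_pos hpos, hpow]
    ring
  have hd := (hS.mul (hv.rpow_const (p := m - 1) (Or.inl hvr.ne'))).neg
  refine (hd.congr_deriv ?_).congr_of_eventuallyEq hflux
  ring_nf

theorem radialSupersolutionAt_of_deriv_eq_neg {p q l : ℝ}
    (huv : ∀ᶠ t in 𝓝 r, deriv u t = -v t ∧ 0 < v t) (hS : HasDerivAt S S' r) (hS' : 0 ≤ S')
    (hSr : 0 < S r) (hv : HasDerivAt v v' r) (hl : 0 ≤ l) (hup : u r ^ p ≤ 1)
    (hrate : l * v r ^ q ≤ (m - 1) * v r ^ (m - 2) * v') :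
    RadialSupersolutionAt m p q l S u r := by
  obtain ⟨hur, hvr⟩ := huv.self_of_nhds
  have hflux := hasDerivAt_radialFlux_of_deriv_eq_neg (m := m) huv hS hv
  refine ⟨hflux.differentiableAt, ?_⟩
  rw [hflux.deriv, hur, abs_neg, abs_of_pos hvr]
  have hdrift : 0 ≤ S' * v r ^ (m - 1) := mul_nonneg hS' (rpow_nonneg hvr.le _)
  have hsource : l * S r * u r ^ p * v r ^ q ≤ S r * (l * v r ^ q) := by
    have : 0 ≤ l * S r * v r ^ q := mul_nonneg (mul_nonneg hl hSr.le) (rpow_nonneg hvr.le _)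
    nlinarith
  nlinarith [mul_le_mul_of_nonneg_left hrate hSr.le]

end RadialFlux

section TailIntegral

variable {g : ℝ → ℝ} {a b : ℝ}

theorem hasDerivAt_setIntegral_Ioo_left (hg : Continuous g) {t : ℝ} (ht : t < b) :
    HasDerivAt (fun s => ∫ x in Ioo s b, g x) (-g t) t := by
  have heq : (fun s => ∫ x in s..b, g x) =ᶠ[𝓝 t] fun s => ∫ x in Ioo s b, g x := by
    filter_upwards [Iio_mem_nhds ht] with s hs
    rw [intervalIntegral.integral_of_le (le_of_lt hs), integral_Ioc_eq_integral_Ioo]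
  exact (intervalIntegral.integral_hasDerivAt_left (hg.intervalIntegrable _ _)
    (hg.stronglyMeasurableAtFilter _ _) hg.continuousAt).congr_of_eventuallyEq heq.symm

theorem hasDerivAt_of_eqOn_const_mul_setIntegral_Ioo {u : ℝ → ℝ} {c t : ℝ} (hg : Continuous g)
    (hu : ∀ r ∈ Icc a b, u r = c * ∫ x in Ioo r b, g x) (ht : t ∈ Ioo a b) :
    HasDerivAt u (-(c * g t)) t := by
  have heq : (fun s => c * ∫ x in Ioo s b, g x) =ᶠ[𝓝 t] u := by
    filter_upwards [isOpen_Ioo.mem_nhds ht] with s hs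
    exact (hu s (Ioo_subset_Icc_self hs)).symm
  rw [← mul_neg]
  exact ((hasDerivAt_setIntegral_Ioo_left hg ht.2).const_mul c).congr_of_eventuallyEq heq.symm

theorem setIntegral_Ioo_pos (hab : a < b) (hg : Continuous g) (hpos : ∀ x ∈ Ioo a b, 0 < g x) :
    0 < ∫ x in Ioo a b, g x := by
  rw [← integral_Ioc_eq_integral_Ioo, ← intervalIntegral.integral_of_le hab.le]
  exact intervalIntegral.intervalIntegral_pos_of_pos_on (hg.intervalIntegrable _ _) hpos hab

theorem inv_mul_setIntegral_Ioo_mem_Icc {r : ℝ} (hg : IntegrableOn g (Ioo a b))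
    (hnonneg : ∀ x ∈ Ioo a b, 0 ≤ g x) (hr : a ≤ r) :
    (∫ x in Ioo a b, g x)⁻¹ * ∫ x in Ioo r b, g x ∈ Icc 0 1 := by
  have hsub : Ioo r b ⊆ Ioo a b := Ioo_subset_Ioo_left hr
  have htail : 0 ≤ ∫ x in Ioo r b, g x :=
    setIntegral_nonneg measurableSet_Ioo fun x hx => hnonneg x (hsub hx)
  have hle : ∫ x in Ioo r b, g x ≤ ∫ x in Ioo a b, g x :=
    setIntegral_mono_set hg ((ae_restrict_mem measurableSet_Ioo).mono hnonneg)
      hsub.eventuallyLE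
  exact ⟨mul_nonneg (inv_nonneg.2 (htail.trans hle)) htail,
    inv_mul_le_one_of_le₀ hle (htail.trans hle)⟩

end TailIntegral

section Profile

noncomputable def profile (ρ θ x : ℝ) : ℝ := (1 - exp (-x / ρ)) ^ θ

variable {ρ θ x : ℝ}

theorem one_sub_exp_neg_div_pos (hρ : 0 < ρ) (hx : 0 < x) : 0 < 1 - exp (-x / ρ) := by
  have : exp (-x / ρ) < 1 := exp_lt_one_iff.2 (by rw [neg_div]; exact neg_neg_of_pos (div_pos hx hρ))
  linarith

theorem one_sub_exp_neg_div_le (hρ : 0 < ρ) (hx : x ≤ ρ) : 1 - exp (-x / ρ) ≤ 1 - exp (-1) := by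
  have : exp (-1) ≤ exp (-x / ρ) :=
    exp_le_exp.2 (by rw [neg_div, neg_le_neg_iff]; exact (div_le_one hρ).2 hx)
  linarith

theorem continuous_profile (hθ : 0 ≤ θ) : Continuous (profile ρ θ) :=
  (continuous_const.sub (by fun_prop)).rpow_const fun _ => Or.inr hθ

theorem profile_pos (hρ : 0 < ρ) (hx : 0 < x) : 0 < profile ρ θ x :=
  rpow_pos_of_pos (one_sub_exp_neg_div_pos hρ hx) θ

theorem hasDerivAt_profile (hρ : 0 < ρ) (hx : 0 < x) :
    HasDerivAt (profile ρ θ) (θ * (1 - exp (-x / ρ)) ^ (θ - 1) * (exp (-x / ρ) / ρ)) x := by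
  have hquot : HasDerivAt (fun y => -y / ρ) (-1 / ρ) x := (hasDerivAt_neg x).div_const ρ
  have hbase : HasDerivAt (fun y => 1 - exp (-y / ρ)) (exp (-x / ρ) / ρ) x :=
    (hquot.exp.const_sub 1).congr_deriv (by ring)
  exact (hbase.rpow_const (Or.inl (one_sub_exp_neg_div_pos hρ hx).ne')).congr_deriv (by ring)

theorem mul_rpow_sub_two_mul_regroup {m q A b : ℝ} (hA : 0 < A) (hb : 0 < b) :
    (A * b ^ θ) ^ (m - 2) * (A * b ^ (θ - 1))
      = A ^ (m - 1 - q) * b ^ (θ * (m - 1 - q) - 1) * (A * b ^ θ) ^ q := by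
  rw [mul_rpow hA.le (rpow_nonneg hb.le _), mul_rpow hA.le (rpow_nonneg hb.le _),
    ← rpow_mul hb.le, ← rpow_mul hb.le]
  calc A ^ (m - 2) * b ^ (θ * (m - 2)) * (A * b ^ (θ - 1))
      = A ^ (m - 2 + 1) * b ^ (θ * (m - 2) + (θ - 1)) := by
        rw [rpow_add_one hA.ne', rpow_add hb]; ring
    _ = A ^ (m - 1 - q + q) * b ^ (θ * (m - 1 - q) - 1 + θ * q) := by ring_nf
    _ = _ := by rw [rpow_add hA, rpow_add hb]; ring

theorem profile_source_le_diffusion {m q A l r : ℝ} (hm : 1 < m) (hθ : 0 ≤ θ)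
    (hθq : θ * (m - 1 - q) < 1) (hρ : 0 < ρ) (hA : 0 < A) (hr : r ∈ Ioc 0 ρ)
    (hl : l ≤ exp (-1) * θ * (m - 1) * A ^ (m - 1 - q)
      * (1 - exp (-1)) ^ (θ * (m - 1 - q) - 1) / ρ) :
    l * (A * profile ρ θ r) ^ q
      ≤ (m - 1) * (A * profile ρ θ r) ^ (m - 2)
        * (A * (θ * (1 - exp (-r / ρ)) ^ (θ - 1) * (exp (-r / ρ) / ρ))) := by
  set b := 1 - exp (-r / ρ) with hb_def
  have hb : 0 < b := one_sub_exp_neg_div_pos hρ hr.1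
  have hb1 : b ≤ 1 - exp (-1) := one_sub_exp_neg_div_le hρ hr.2
  have hK : 0 ≤ θ * (m - 1) / ρ * A ^ (m - 1 - q) :=
    mul_nonneg (div_nonneg (mul_nonneg hθ (by linarith)) hρ.le) (rpow_nonneg hA.le _)
  have hcorner : exp (-1) * (1 - exp (-1)) ^ (θ * (m - 1 - q) - 1)
      ≤ (1 - b) * b ^ (θ * (m - 1 - q) - 1) :=
    mul_le_mul (by linarith) (rpow_le_rpow_of_nonpos hb hb1 (by linarith))
      (rpow_nonneg (hb.le.trans hb1) _) (by linarith [exp_pos (-r / ρ)])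
  have hlK : l ≤ θ * (m - 1) / ρ * A ^ (m - 1 - q) * ((1 - b) * b ^ (θ * (m - 1 - q) - 1)) :=
    calc l ≤ θ * (m - 1) / ρ * A ^ (m - 1 - q)
          * (exp (-1) * (1 - exp (-1)) ^ (θ * (m - 1 - q) - 1)) := by
          convert hl using 1; ring
      _ ≤ _ := mul_le_mul_of_nonneg_left hcorner hK
  have hE : exp (-r / ρ) = 1 - b := by rw [hb_def]; ring
  have hprofile : profile ρ θ r = b ^ θ := rfl
  calc l * (A * profile ρ θ r) ^ q
      ≤ θ * (m - 1) / ρ * A ^ (m - 1 - q) * ((1 - b) * b ^ (θ * (m - 1 - q) - 1))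
        * (A * b ^ θ) ^ q :=
        mul_le_mul_of_nonneg_right hlK (rpow_nonneg (mul_pos hA (profile_pos hρ hr.1)).le _)
    _ = _ := by
        rw [hE, hprofile]
        linear_combination (-(θ * (m - 1) * (1 - b) / ρ))
          * mul_rpow_sub_two_mul_regroup (m := m) (q := q) (θ := θ) hA hb

end Profile

/-- Radial supersolution near the origin
(Step 2 of the proof of Theorem 1.5 (A)). -/
theorem radial_supersolution_near_origin_G1
    (m p q θ ρ A : ℝ)
    (hm : 1 < m) (hp : 0 ≤ p) (hθ : 0 < θ) (hθq : θ * (m - 1 - q) < 1)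
    (hρ : 0 < ρ)
    (S u : ℝ → ℝ)
    (hS : ∀ r ∈ Set.Ioo (0 : ℝ) ρ,
      0 < S r ∧ DifferentiableAt ℝ S r ∧ 0 ≤ deriv S r)
    (hA : A = (∫ x in Set.Ioo (0 : ℝ) ρ, (1 - Real.exp (-x / ρ)) ^ θ)⁻¹)
    (hu : ∀ r ∈ Set.Icc (0 : ℝ) ρ,
      u r = A * ∫ x in Set.Ioo r ρ, (1 - Real.exp (-x / ρ)) ^ θ) :
    u 0 = 1 ∧ (∀ r ∈ Set.Icc (0 : ℝ) ρ, 0 ≤ u r ∧ u r ≤ 1) ∧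
    ∀ l : ℝ, 0 < l →
      l ≤ Real.exp (-1) * θ * (m - 1) * A ^ (m - 1 - q)
          * (1 - Real.exp (-1)) ^ (θ * (m - 1 - q) - 1) / ρ →
      ∀ r ∈ Set.Ioo (0 : ℝ) ρ,
        DifferentiableAt ℝ (fun t => S t * |deriv u t| ^ (m - 2) * deriv u t) r ∧
        deriv (fun t => S t * |deriv u t| ^ (m - 2) * deriv u t) r
          + l * S r * u r ^ p * |deriv u r| ^ q ≤ 0 := by
  have hg : Continuous (profile ρ θ) := continuous_profile hθ.le
  have hI : 0 < ∫ x in Ioo 0 ρ, profile ρ θ x :=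
    setIntegral_Ioo_pos hρ hg fun x hx => profile_pos hρ hx.1
  have hApos : 0 < A := hA ▸ inv_pos.2 hI
  have hbounds : ∀ r ∈ Icc 0 ρ, 0 ≤ u r ∧ u r ≤ 1 := fun r hr => by
    rw [hu r hr, hA]
    exact inv_mul_setIntegral_Ioo_mem_Icc (hg.integrableOn_Icc.mono_set Ioo_subset_Icc_self)
      (fun x hx => (profile_pos hρ hx.1).le) hr.1
  refine ⟨by rw [hu 0 ⟨le_rfl, hρ.le⟩, hA]; exact inv_mul_cancel₀ hI.ne', hbounds, ?_⟩
  intro l hl hlle r hr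
  obtain ⟨hSr, hSd, hS'⟩ := hS r hr
  have huv : ∀ᶠ t in 𝓝 r, deriv u t = -(A * profile ρ θ t) ∧ 0 < A * profile ρ θ t := by
    filter_upwards [isOpen_Ioo.mem_nhds hr] with t ht
    exact ⟨(hasDerivAt_of_eqOn_const_mul_setIntegral_Ioo hg hu ht).deriv,
      mul_pos hApos (profile_pos hρ ht.1)⟩
  exact radialSupersolutionAt_of_deriv_eq_neg huv hSd.hasDerivAt hS' hSr
    ((hasDerivAt_profile hρ hr.1).const_mul A) hl.le
    (rpow_le_one (hbounds r (Ioo_subset_Icc_self hr)).1 (hbounds r (Ioo_subset_Icc_self hr)).2 hp)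
    (profile_source_le_diffusion hm hθ.le hθq hρ hApos (Ioo_subset_Ioc_self hr) hlle)
end

section
/- (Exponential radial supersolution for p = 0, q = m − 1; proof of Theorem 1.5 (E), case p = 0) Let m > 1, ι > 1, η > 0, and define S(r) = ι·e^{ι r} and u(r) = e^{−η r}. Then the radial inequality (S·|u'|^{m−2}·u')'(r) + S(r)·|u'(r)|^{m−1} ≤ 0 holds for all r ∈ ℝ if and only if η ≤ (ι − 1)/(m − 1). -/
open Real

/-!
Along an exponential profile everything is exponential: with `c = ι - η (m - 1)`, the energy
`F = S |u'|^(m-1)` equals `ι η^(m-1) e^(c r)`, and since `u' < 0` the flux `S |u'|^(m-2) u'` is `-F`.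
The radial expression is therefore `-F' + F = (1 - c) F`, which is nonpositive everywhere exactly
when `c ≥ 1`, i.e. `η ≤ (ι - 1) / (m - 1)`.
-/

lemma deriv_exp_const_mul (c : ℝ) : deriv (fun t => exp (c * t)) = fun t => c * exp (c * t) := by
  simpa using iteratedDeriv_exp_const_mul 1 c

lemma abs_rpow_sub_two_mul_of_neg {x : ℝ} (hx : x < 0) (m : ℝ) :
    |x| ^ (m - 2) * x = -|x| ^ (m - 1) := by
  have hm : m - 1 = m - 2 + 1 := by ring
  rw [hm, rpow_add_one (abs_ne_zero.mpr hx.ne), abs_of_neg hx]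
  ring

lemma const_mul_exp_rpow {K : ℝ} (hK : 0 ≤ K) (a p t : ℝ) :
    (K * exp (a * t)) ^ p = K ^ p * exp (a * p * t) := by
  rw [mul_rpow hK (exp_pos _).le, ← exp_mul]
  ring_nf

lemma neg_const_mul_exp_supersolution_iff {K : ℝ} (hK : 0 < K) (c : ℝ) :
    (∀ r, DifferentiableAt ℝ (fun t => -K * exp (c * t)) r ∧
      deriv (fun t => -K * exp (c * t)) r + K * exp (c * r) ≤ 0) ↔ 1 ≤ c := by
  have hexpr : ∀ r, deriv (fun t => -K * exp (c * t)) r + K * exp (c * r)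
      = K * exp (c * r) * (1 - c) := fun r => by
    rw [deriv_const_mul_field', deriv_exp_const_mul]
    ring
  have hpos : ∀ r, 0 < K * exp (c * r) := fun r => mul_pos hK (exp_pos _)
  refine ⟨fun h => ?_, fun hc r => ⟨by fun_prop, ?_⟩⟩
  · have h0 := (h 0).2
    rw [hexpr] at h0
    linarith [nonpos_of_mul_nonpos_right h0 (hpos 0)]
  · rw [hexpr]
    exact mul_nonpos_of_nonneg_of_nonpos (hpos r).le (by linarith)

/-- Exponential radial supersolution for `p = 0`, `q = m − 1`
(proof of Theorem 1.5 (E), case `p = 0`). -/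
theorem radial_supersolution_critical_line_p_zero
    (m ι η : ℝ) (hm : 1 < m) (hι : 1 < ι) (hη : 0 < η)
    (S u : ℝ → ℝ)
    (hS : ∀ r : ℝ, S r = ι * Real.exp (ι * r))
    (hu : ∀ r : ℝ, u r = Real.exp (-η * r)) :
    (∀ r : ℝ,
      DifferentiableAt ℝ (fun t => S t * |deriv u t| ^ (m - 2) * deriv u t) r ∧
      deriv (fun t => S t * |deriv u t| ^ (m - 2) * deriv u t) r
        + S r * |deriv u r| ^ (m - 1) ≤ 0) ↔
    η ≤ (ι - 1) / (m - 1) := by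
  set c := ι - η * (m - 1) with hc
  have hdu : ∀ t, deriv u t = -η * exp (-η * t) := by
    rw [funext hu, deriv_exp_const_mul]
    exact fun t => rfl
  have henergy : ∀ r, S r * |deriv u r| ^ (m - 1) = ι * η ^ (m - 1) * exp (c * r) := by
    intro r
    rw [hdu, hS, abs_mul, abs_neg, abs_of_pos hη, abs_of_pos (exp_pos _),
      const_mul_exp_rpow hη.le, mul_mul_mul_comm, ← exp_add, hc]
    ring_nf
  have hflux : (fun t => S t * |deriv u t| ^ (m - 2) * deriv u t)
      = fun t => -(ι * η ^ (m - 1)) * exp (c * t) := by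
    funext t
    have hneg : deriv u t < 0 := by
      rw [hdu]
      exact mul_neg_of_neg_of_pos (neg_neg_of_pos hη) (exp_pos _)
    rw [mul_assoc, abs_rpow_sub_two_mul_of_neg hneg, mul_neg, henergy]
    ring
  have hK : 0 < ι * η ^ (m - 1) := mul_pos (by linarith) (rpow_pos_of_pos hη _)
  simp only [hflux, henergy]
  rw [neg_const_mul_exp_supersolution_iff hK, le_div_iff₀ (by linarith)]
  constructor <;> intro h <;> linarith
end

section
/- (Near-origin radial supersolution for p = 0, q = m − 1; proof of Theorem 1.5 (E), case p = 0) Let m > 1, α > 1, c₀ > 0, and define u₀(r) = c₀ − r^α. Set R₁ = min{c₀^{1/α}, (m−1)(α−1)}, and let S be a differentiable function on (0, R₁) with S > 0 and S' ≥ 0 there. Then u₀(r) > 0 and u₀'(r) < 0 for all r ∈ (0, R₁), and the radial inequality (S·|u₀'|^{m−2}·u₀')'(r) + S(r)·|u₀'(r)|^{m−1} ≤ 0 holds for all r ∈ (0, R₁). -/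
/-!
For `t > 0` we have `u₀'(t) = -α t^(α-1) < 0`, so the flux `S |u₀'|^(m-2) u₀'` equals
`-α^(m-1) S(t) t^β` with `β = (α-1)(m-1)`, while `S |u₀'|^(m-1) = α^(m-1) S(t) t^β`.
The radial inequality therefore reduces to `S' r^β + S (β r^(β-1) - r^β) ≥ 0`, which holds
because `S' ≥ 0`, `S > 0` and `r^β ≤ β r^(β-1)` exactly when `r ≤ β`.
-/

open MeasureTheory Real

lemma abs_rpow_sub_two_mul_of_neg_s17 {y : ℝ} (hy : y < 0) (p : ℝ) :
    |y| ^ (p - 2) * y = -|y| ^ (p - 1) := by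
  rw [show p - 1 = p - 2 + 1 by ring, rpow_add_one (abs_pos.2 hy.ne).ne', abs_of_neg hy]
  ring

lemma rpow_le_mul_rpow_sub_one {r β : ℝ} (hr : 0 < r) (hrβ : r ≤ β) :
    r ^ β ≤ β * r ^ (β - 1) := by
  calc r ^ β = r ^ (β - 1) * r := by rw [← rpow_add_one hr.ne', sub_add_cancel]
    _ ≤ r ^ (β - 1) * β := by gcongr
    _ = β * r ^ (β - 1) := mul_comm _ _

section PowerProfile

variable {c α : ℝ} {u : ℝ → ℝ}

lemma hasDerivAt_of_eq_const_sub_rpow (hu : ∀ t, 0 < t → u t = c - t ^ α) {t : ℝ}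
    (ht : 0 < t) : HasDerivAt u (-(α * t ^ (α - 1))) t := by
  have h : HasDerivAt (fun x : ℝ => c - x ^ α) (-(α * t ^ (α - 1))) t := by
    simpa using (hasDerivAt_rpow_const (p := α) (Or.inl ht.ne')).const_sub c
  exact h.congr_of_eventuallyEq (Filter.eventually_of_mem (Ioi_mem_nhds ht) hu)

lemma pos_of_eq_const_sub_rpow (hu : ∀ t, 0 < t → u t = c - t ^ α) (hc : 0 < c)
    (hα : 0 < α) {t : ℝ} (ht : 0 < t) (htc : t < c ^ (1 / α)) : 0 < u t := by
  rw [hu t ht, sub_pos, ← lt_rpow_inv_iff_of_pos ht.le hc.le hα, ← one_div]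
  exact htc

lemma deriv_neg_of_eq_const_sub_rpow (hu : ∀ t, 0 < t → u t = c - t ^ α) (hα : 0 < α)
    {t : ℝ} (ht : 0 < t) : deriv u t < 0 := by
  rw [(hasDerivAt_of_eq_const_sub_rpow hu ht).deriv, neg_lt_zero]
  exact mul_pos hα (rpow_pos_of_pos ht _)

lemma abs_deriv_rpow_of_eq_const_sub_rpow (hu : ∀ t, 0 < t → u t = c - t ^ α) (hα : 0 < α)
    {t : ℝ} (ht : 0 < t) (m : ℝ) :
    |deriv u t| ^ (m - 1) = α ^ (m - 1) * t ^ ((α - 1) * (m - 1)) := by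
  have htα : 0 < t ^ (α - 1) := rpow_pos_of_pos ht _
  rw [(hasDerivAt_of_eq_const_sub_rpow hu ht).deriv, abs_neg, abs_of_pos (mul_pos hα htα),
    mul_rpow hα.le htα.le, ← rpow_mul ht.le]

lemma flux_eq_of_eq_const_sub_rpow (hu : ∀ t, 0 < t → u t = c - t ^ α) (hα : 0 < α)
    (S : ℝ → ℝ) (m : ℝ) {t : ℝ} (ht : 0 < t) :
    S t * |deriv u t| ^ (m - 2) * deriv u t
      = -α ^ (m - 1) * (S t * t ^ ((α - 1) * (m - 1))) := by
  rw [mul_assoc, abs_rpow_sub_two_mul_of_neg_s17 (deriv_neg_of_eq_const_sub_rpow hu hα ht),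
    abs_deriv_rpow_of_eq_const_sub_rpow hu hα ht]
  ring

lemma hasDerivAt_flux_of_eq_const_sub_rpow (hu : ∀ t, 0 < t → u t = c - t ^ α) (hα : 0 < α)
    {S : ℝ → ℝ} (m : ℝ) {r : ℝ} (hr : 0 < r) (hS : DifferentiableAt ℝ S r) :
    HasDerivAt (fun t => S t * |deriv u t| ^ (m - 2) * deriv u t)
      (-α ^ (m - 1) * (deriv S r * r ^ ((α - 1) * (m - 1))
        + S r * ((α - 1) * (m - 1) * r ^ ((α - 1) * (m - 1) - 1)))) r := by
  have h := (hS.hasDerivAt.mul (hasDerivAt_rpow_const (p := (α - 1) * (m - 1))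
    (Or.inl hr.ne'))).const_mul (-α ^ (m - 1))
  refine h.congr_of_eventuallyEq (Filter.eventually_of_mem (Ioi_mem_nhds hr) fun t ht => ?_)
  exact flux_eq_of_eq_const_sub_rpow hu hα S m ht

end PowerProfile

theorem radial_supersolution_near_origin_p_zero_general
    (m α c₀ R₁ : ℝ)
    (hα : 1 < α) (hc₀ : 0 < c₀)
    (hR₁ : R₁ = min (c₀ ^ (1 / α)) ((m - 1) * (α - 1)))
    (u₀ S : ℝ → ℝ)
    (hu₀ : ∀ r : ℝ, 0 < r → u₀ r = c₀ - r ^ α)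
    (hS : ∀ r ∈ Set.Ioo (0 : ℝ) R₁,
      0 < S r ∧ DifferentiableAt ℝ S r ∧ 0 ≤ deriv S r) :
    ∀ r ∈ Set.Ioo (0 : ℝ) R₁,
      0 < u₀ r ∧ deriv u₀ r < 0 ∧
      DifferentiableAt ℝ (fun t => S t * |deriv u₀ t| ^ (m - 2) * deriv u₀ t) r ∧
      deriv (fun t => S t * |deriv u₀ t| ^ (m - 2) * deriv u₀ t) r
        + S r * |deriv u₀ r| ^ (m - 1) ≤ 0 := by
  intro r hr
  obtain ⟨hSpos, hSdiff, hSderiv⟩ := hS r hr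
  obtain ⟨hr0, hrR⟩ := hr
  have hα0 : 0 < α := by linarith
  have hrβ : r ≤ (α - 1) * (m - 1) := by
    rw [mul_comm]; exact (hrR.trans_le (hR₁ ▸ min_le_right _ _)).le
  have hflux := hasDerivAt_flux_of_eq_const_sub_rpow hu₀ hα0 m hr0 hSdiff
  refine ⟨pos_of_eq_const_sub_rpow hu₀ hc₀ hα0 hr0 (hrR.trans_le (hR₁ ▸ min_le_left _ _)),
    deriv_neg_of_eq_const_sub_rpow hu₀ hα0 hr0, hflux.differentiableAt, ?_⟩
  rw [hflux.deriv, abs_deriv_rpow_of_eq_const_sub_rpow hu₀ hα0 hr0]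
  have hbracket : 0 ≤ α ^ (m - 1) * (deriv S r * r ^ ((α - 1) * (m - 1)) + S r *
      ((α - 1) * (m - 1) * r ^ ((α - 1) * (m - 1) - 1) - r ^ ((α - 1) * (m - 1)))) := by
    have hgap := sub_nonneg.2 (rpow_le_mul_rpow_sub_one hr0 hrβ)
    positivity
  linear_combination hbracket

/-- Near-origin radial supersolution for `p = 0`, `q = m − 1`
(proof of Theorem 1.5 (E), case `p = 0`). -/
theorem radial_supersolution_near_origin_p_zero
    (m α c₀ R₁ : ℝ)
    (hm : 1 < m) (hα : 1 < α) (hc₀ : 0 < c₀)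
    (hR₁ : R₁ = min (c₀ ^ (1 / α)) ((m - 1) * (α - 1)))
    (u₀ S : ℝ → ℝ)
    (hu₀ : ∀ r : ℝ, 0 < r → u₀ r = c₀ - r ^ α)
    (hS : ∀ r ∈ Set.Ioo (0 : ℝ) R₁,
      0 < S r ∧ DifferentiableAt ℝ S r ∧ 0 ≤ deriv S r) :
    ∀ r ∈ Set.Ioo (0 : ℝ) R₁,
      0 < u₀ r ∧ deriv u₀ r < 0 ∧
      DifferentiableAt ℝ (fun t => S t * |deriv u₀ t| ^ (m - 2) * deriv u₀ t) r ∧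
      deriv (fun t => S t * |deriv u₀ t| ^ (m - 2) * deriv u₀ t) r
        + S r * |deriv u₀ r| ^ (m - 1) ≤ 0 :=
  radial_supersolution_near_origin_p_zero_general m α c₀ R₁ hα hc₀ hR₁ u₀ S hu₀ hS
end

section
/- (Radial supersolution near infinity for superexponential weight, region G_6; proof of Theorem 1.5 (F)) Let m > 1, q < m − 1, p < m − 1 − q, λ > 0, and let γ > 2(m − 1 − q) + 1. Define S(r) = e^{λ·r^γ·ln r} and u(r) = e^{(ln r)/r} for r > 1. Then there exists R₀ > e such that for all r ≥ R₀, u'(r) < 0 and the radial inequality (S·|u'|^{m−2}·u')'(r) + S(r)·u(r)^p·|u'(r)|^q ≤ 0 holds. -/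
/-!
Write `g = -u' = u (log r - 1) / r²`, positive for `r > e`. The flux is
`S |u'|^(m-2) u' = -S g^(m-1)`, so the inequality becomes
`u^p g^q ≤ (S'/S) g^(m-1) + (m-1) g^(m-2) g'`. Here `S'/S ≥ λ r^(γ-1)`, `1 ≤ u ≤ e`, `g ≥ r⁻²` and
`-g' ≤ 3 g / r`, so for large `r` each of `u^p g^q` and `(m-1) g^(m-2) (-g')` is at most half of
`(S'/S) g^(m-1)`: the first because `γ - 1 > 2 (m-1-q)` makes `λ r^(γ-1) (r⁻²)^(m-1-q) → ∞`,
the second because `r · S'/S ≥ λ r^γ → ∞`.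
-/

open Real Filter Topology

noncomputable section

namespace RadialSupersolution

/- `weight` and `profile` are the paper's `S` and `u`; `weightLogDeriv = S'/S`,
`profileSlope = -u'` and `profileSlopeDeriv = -u''`. -/
def weight (lam γ r : ℝ) : ℝ := exp (lam * r ^ γ * log r)

def weightLogDeriv (lam γ r : ℝ) : ℝ := lam * r ^ (γ - 1) * (γ * log r + 1)

def profile (r : ℝ) : ℝ := exp (log r / r)

def profileSlope (r : ℝ) : ℝ := profile r * ((log r - 1) / r ^ 2)

def profileSlopeDeriv (r : ℝ) : ℝ :=
  profile r * ((3 - 2 * log r) / r ^ 3 - ((log r - 1) / r ^ 2) ^ 2)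

variable {r : ℝ}

theorem hasDerivAt_weight (lam γ : ℝ) (hr : 0 < r) :
    HasDerivAt (weight lam γ) (weight lam γ r * weightLogDeriv lam γ r) r := by
  have hexponent : HasDerivAt (fun x => lam * x ^ γ * log x) (weightLogDeriv lam γ r) r := by
    refine (((hasDerivAt_rpow_const (p := γ) (Or.inl hr.ne')).const_mul lam).mul
      (hasDerivAt_log hr.ne')).congr_deriv ?_
    rw [weightLogDeriv, rpow_sub_one hr.ne']
    field_simp
  exact hexponent.exp

theorem hasDerivAt_profile (hr : 0 < r) : HasDerivAt profile (-profileSlope r) r := by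
  have hexponent : HasDerivAt (fun x => log x / x) (-((log r - 1) / r ^ 2)) r := by
    refine ((hasDerivAt_log hr.ne').div (hasDerivAt_id r) hr.ne').congr_deriv ?_
    rw [id]
    field_simp
    ring
  refine hexponent.exp.congr_deriv ?_
  rw [profileSlope, profile]
  ring

theorem hasDerivAt_profileSlope (hr : 0 < r) :
    HasDerivAt profileSlope (profileSlopeDeriv r) r := by
  have hfactor : HasDerivAt (fun x => (log x - 1) / x ^ 2) ((3 - 2 * log r) / r ^ 3) r := by
    refine (((hasDerivAt_log hr.ne').sub_const 1).div (hasDerivAt_pow 2 r)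
      (pow_ne_zero 2 hr.ne')).congr_deriv ?_
    field_simp
    ring
  refine ((hasDerivAt_profile hr).mul hfactor).congr_deriv ?_
  rw [profileSlopeDeriv, profileSlope]
  ring

theorem one_le_profile (hr : 1 ≤ r) : 1 ≤ profile r :=
  one_le_exp (div_nonneg (log_nonneg hr) (by linarith))

theorem profile_le_exp_one (hr : 0 < r) : profile r ≤ exp 1 :=
  exp_le_exp.2 ((div_le_one hr).2 (by linarith [log_le_sub_one_of_pos hr]))

theorem rpow_profile_le (p : ℝ) (hr : 1 ≤ r) : profile r ^ p ≤ exp |p| := by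
  rcases le_or_gt 0 p with hp | hp
  · calc profile r ^ p ≤ exp 1 ^ p :=
          rpow_le_rpow (exp_pos _).le (profile_le_exp_one (by linarith)) hp
      _ = exp p := by rw [← exp_mul, one_mul]
      _ ≤ exp |p| := exp_le_exp.2 (le_abs_self p)
  · exact (rpow_le_one_of_one_le_of_nonpos (one_le_profile hr) hp.le).trans
      (one_le_exp (abs_nonneg p))

theorem profileSlope_pos (hr : exp 1 < r) : 0 < profileSlope r := by
  have hr0 : 0 < r := (exp_pos 1).trans hr
  have : 1 < log r := (lt_log_iff_exp_lt hr0).2 hr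
  exact mul_pos (exp_pos _) (div_pos (by linarith) (by positivity))

theorem rpow_neg_two_le_profileSlope (hr : exp 2 ≤ r) : r ^ (-2 : ℝ) ≤ profileSlope r := by
  have hr0 : 0 < r := (exp_pos 2).trans_le hr
  have hlog : 2 ≤ log r := (le_log_iff_exp_le hr0).2 hr
  have hr1 : 1 ≤ r := (one_le_exp (by norm_num)).trans hr
  rw [rpow_neg hr0.le, rpow_two, profileSlope, ← one_div]
  calc 1 / r ^ 2 ≤ (log r - 1) / r ^ 2 := by gcongr; linarith
    _ ≤ profile r * ((log r - 1) / r ^ 2) :=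
      le_mul_of_one_le_left (div_nonneg (by linarith) (by positivity)) (one_le_profile hr1)

theorem neg_profileSlopeDeriv_le (hr : exp 1 ≤ r) :
    -profileSlopeDeriv r ≤ 3 * profileSlope r / r := by
  have hr0 : 0 < r := (exp_pos 1).trans_le hr
  have hlog : 1 ≤ log r := (le_log_iff_exp_le hr0).2 hr
  have hlog_le : log r ≤ r := by linarith [log_le_sub_one_of_pos hr0]
  have hgap : 3 * profileSlope r / r + profileSlopeDeriv r
      = profile r * (log r * r - (log r - 1) ^ 2) / r ^ 4 := by
    simp only [profileSlope, profileSlopeDeriv]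
    field_simp
    ring
  have hsq : (log r - 1) ^ 2 ≤ log r * r := by nlinarith
  have hgap_nonneg : 0 ≤ profile r * (log r * r - (log r - 1) ^ 2) / r ^ 4 :=
    div_nonneg (mul_nonneg (exp_pos _).le (by linarith)) (by positivity)
  linarith

theorem rpow_le_weightLogDeriv {lam γ : ℝ} (hlam : 0 ≤ lam) (hγ : 0 ≤ γ) (hr : 1 ≤ r) :
    lam * r ^ (γ - 1) ≤ weightLogDeriv lam γ r :=
  le_mul_of_one_le_right (mul_nonneg hlam (rpow_nonneg (by linarith) _))
    (by nlinarith [log_nonneg hr])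

theorem rpow_mul_le_add_of_halves {a A g g' m q : ℝ} (hg : 0 < g)
    (hsource : a ≤ A / 2 * g ^ (m - 1 - q)) (hdiffusion : (m - 1) * -g' ≤ A / 2 * g) :
    a * g ^ q ≤ A * g ^ (m - 1) + (m - 1) * g ^ (m - 2) * g' := by
  have hsource' : a * g ^ q ≤ A / 2 * g ^ (m - 1) :=
    calc a * g ^ q ≤ A / 2 * g ^ (m - 1 - q) * g ^ q :=
          mul_le_mul_of_nonneg_right hsource (rpow_nonneg hg.le q)
      _ = A / 2 * g ^ (m - 1) := by rw [mul_assoc, ← rpow_add hg, sub_add_cancel]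
  have hdiffusion' : (m - 1) * g ^ (m - 2) * -g' ≤ A / 2 * g ^ (m - 1) :=
    calc (m - 1) * g ^ (m - 2) * -g' = (m - 1) * -g' * g ^ (m - 2) := by ring
      _ ≤ A / 2 * g * g ^ (m - 2) := mul_le_mul_of_nonneg_right hdiffusion (rpow_nonneg hg.le _)
      _ = A / 2 * g ^ (m - 1) := by
        rw [mul_assoc, mul_comm g, ← rpow_add_one hg.ne']
        ring_nf
  linarith

theorem eventually_rpow_profile_le (p : ℝ) {m q lam γ : ℝ} (hq : q < m - 1) (hlam : 0 < lam)
    (hγ : 2 * (m - 1 - q) + 1 < γ) :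
    ∀ᶠ r in atTop,
      profile r ^ p ≤ weightLogDeriv lam γ r / 2 * profileSlope r ^ (m - 1 - q) := by
  have hgrowth : Tendsto (fun r : ℝ => lam * r ^ (γ - 1 - 2 * (m - 1 - q))) atTop atTop :=
    (tendsto_rpow_atTop (by linarith)).const_mul_atTop hlam
  filter_upwards [eventually_ge_atTop (exp 2), hgrowth.eventually_ge_atTop (2 * exp |p|)]
    with r hr hlarge
  have hr1 : 1 ≤ r := (one_le_exp (by norm_num)).trans hr
  have hr0 : 0 < r := by linarith
  have hsplit : r ^ (γ - 1 - 2 * (m - 1 - q)) = r ^ (γ - 1) * (r ^ (-2 : ℝ)) ^ (m - 1 - q) := by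
    rw [← rpow_mul hr0.le, ← rpow_add hr0]
    ring_nf
  calc profile r ^ p ≤ exp |p| := rpow_profile_le p hr1
    _ ≤ lam * r ^ (γ - 1) / 2 * (r ^ (-2 : ℝ)) ^ (m - 1 - q) := by
      rw [hsplit] at hlarge
      linarith
    _ ≤ weightLogDeriv lam γ r / 2 * profileSlope r ^ (m - 1 - q) := by
      have hA : lam * r ^ (γ - 1) ≤ weightLogDeriv lam γ r :=
        rpow_le_weightLogDeriv hlam.le (by linarith) hr1
      have := rpow_neg_two_le_profileSlope hr
      gcongr
      linarith [(by positivity : 0 ≤ lam * r ^ (γ - 1))]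

theorem eventually_neg_profileSlopeDeriv_le {m lam γ : ℝ} (hm : 1 < m) (hlam : 0 < lam)
    (hγ : 0 < γ) :
    ∀ᶠ r in atTop,
      (m - 1) * -profileSlopeDeriv r ≤ weightLogDeriv lam γ r / 2 * profileSlope r := by
  filter_upwards [eventually_gt_atTop (exp 1),
    ((tendsto_rpow_atTop hγ).const_mul_atTop hlam).eventually_ge_atTop (6 * (m - 1))]
    with r hr hlarge
  have hr1 : 1 ≤ r := (one_le_exp (by norm_num)).trans hr.le
  have hr0 : 0 < r := by linarith
  have hrate : 6 * (m - 1) / r ≤ weightLogDeriv lam γ r := by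
    rw [div_le_iff₀ hr0]
    calc 6 * (m - 1) ≤ lam * r ^ γ := hlarge
      _ = lam * r ^ (γ - 1) * r := by rw [mul_assoc, ← rpow_add_one hr0.ne', sub_add_cancel]
      _ ≤ weightLogDeriv lam γ r * r := by
        gcongr
        exact rpow_le_weightLogDeriv hlam.le hγ.le hr1
  calc (m - 1) * -profileSlopeDeriv r ≤ (m - 1) * (3 * profileSlope r / r) := by
        have := neg_profileSlopeDeriv_le hr.le
        gcongr
    _ = 6 * (m - 1) / r / 2 * profileSlope r := by ring
    _ ≤ weightLogDeriv lam γ r / 2 * profileSlope r := by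
        gcongr
        exact (profileSlope_pos hr).le

theorem eventually_source_le (p : ℝ) {m q lam γ : ℝ} (hm : 1 < m) (hq : q < m - 1)
    (hlam : 0 < lam) (hγ : 2 * (m - 1 - q) + 1 < γ) :
    ∀ᶠ r in atTop, profile r ^ p * profileSlope r ^ q ≤
      weightLogDeriv lam γ r * profileSlope r ^ (m - 1)
        + (m - 1) * profileSlope r ^ (m - 2) * profileSlopeDeriv r := by
  filter_upwards [eventually_gt_atTop (exp 1), eventually_rpow_profile_le p hq hlam hγ,
    eventually_neg_profileSlopeDeriv_le hm hlam (by linarith)] with r hr hsource hdiffusion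
  exact rpow_mul_le_add_of_halves (profileSlope_pos hr) hsource hdiffusion

theorem hasDerivAt_neg_weight_mul_rpow_profileSlope (m lam γ : ℝ) (hr : exp 1 < r) :
    HasDerivAt (fun t => -(weight lam γ t * profileSlope t ^ (m - 1)))
      (-(weight lam γ r * (weightLogDeriv lam γ r * profileSlope r ^ (m - 1)
        + (m - 1) * profileSlope r ^ (m - 2) * profileSlopeDeriv r))) r := by
  have hr0 : 0 < r := (exp_pos 1).trans hr
  refine ((hasDerivAt_weight lam γ hr0).mul ((hasDerivAt_profileSlope hr0).rpow_const
    (p := m - 1) (Or.inl (profileSlope_pos hr).ne'))).neg.congr_deriv ?_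
  rw [show m - 1 - 1 = m - 2 by ring]
  ring

variable {u : ℝ → ℝ}

theorem deriv_eq_neg_profileSlope (hu : ∀ t, 1 < t → u t = profile t) (hr : 1 < r) :
    deriv u r = -profileSlope r := by
  have hprofile : u =ᶠ[𝓝 r] profile := eventually_of_mem (Ioi_mem_nhds hr) hu
  rw [hprofile.deriv_eq, (hasDerivAt_profile (by linarith)).deriv]

theorem flux_eventuallyEq {S : ℝ → ℝ} (m lam γ : ℝ) (hS : ∀ t, 1 < t → S t = weight lam γ t)
    (hu : ∀ t, 1 < t → u t = profile t) (hr : exp 1 < r) :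
    (fun t => S t * |deriv u t| ^ (m - 2) * deriv u t)
      =ᶠ[𝓝 r] fun t => -(weight lam γ t * profileSlope t ^ (m - 1)) := by
  filter_upwards [Ioi_mem_nhds hr] with t ht
  have ht1 : 1 < t := (one_lt_exp_iff.2 one_pos).trans ht
  have hg := profileSlope_pos ht
  rw [deriv_eq_neg_profileSlope hu ht1, hS t ht1, abs_neg, abs_of_pos hg, mul_assoc, mul_neg,
    ← rpow_add_one hg.ne', show m - 2 + 1 = m - 1 by ring, mul_neg]

theorem radial_supersolution_at {S : ℝ → ℝ} {m p q lam γ : ℝ}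
    (hS : ∀ t, 1 < t → S t = weight lam γ t) (hu : ∀ t, 1 < t → u t = profile t)
    (hr : exp 1 < r)
    (hsource : profile r ^ p * profileSlope r ^ q ≤
      weightLogDeriv lam γ r * profileSlope r ^ (m - 1)
        + (m - 1) * profileSlope r ^ (m - 2) * profileSlopeDeriv r) :
    deriv u r < 0 ∧
      DifferentiableAt ℝ (fun t => S t * |deriv u t| ^ (m - 2) * deriv u t) r ∧
      deriv (fun t => S t * |deriv u t| ^ (m - 2) * deriv u t) r
        + S r * u r ^ p * |deriv u r| ^ q ≤ 0 := by
  have hr1 : 1 < r := (one_lt_exp_iff.2 one_pos).trans hr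
  have hg := profileSlope_pos hr
  have hflux := (hasDerivAt_neg_weight_mul_rpow_profileSlope m lam γ hr).congr_of_eventuallyEq
    (flux_eventuallyEq m lam γ hS hu hr)
  refine ⟨by rw [deriv_eq_neg_profileSlope hu hr1]; linarith, hflux.differentiableAt, ?_⟩
  rw [hflux.deriv, deriv_eq_neg_profileSlope hu hr1, hS r hr1, hu r hr1, abs_neg, abs_of_pos hg]
  have hweight : 0 < weight lam γ r := exp_pos _
  linarith [mul_le_mul_of_nonneg_left hsource hweight.le]

end RadialSupersolution

end

theorem radial_supersolution_near_infinity_G6_general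
    (m p q lam γ : ℝ)
    (hm : 1 < m) (hq : q < m - 1) (hlam : 0 < lam)
    (hγ : 2 * (m - 1 - q) + 1 < γ)
    (S u : ℝ → ℝ)
    (hS : ∀ r : ℝ, 1 < r → S r = Real.exp (lam * r ^ γ * Real.log r))
    (hu : ∀ r : ℝ, 1 < r → u r = Real.exp (Real.log r / r)) :
    ∃ R₀ : ℝ, Real.exp 1 < R₀ ∧ ∀ r : ℝ, R₀ ≤ r →
      deriv u r < 0 ∧
      DifferentiableAt ℝ (fun t => S t * |deriv u t| ^ (m - 2) * deriv u t) r ∧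
      deriv (fun t => S t * |deriv u t| ^ (m - 2) * deriv u t) r
        + S r * u r ^ p * |deriv u r| ^ q ≤ 0 := by
  obtain ⟨R, hR⟩ := eventually_atTop.1
    ((RadialSupersolution.eventually_source_le p hm hq hlam hγ).and
      (eventually_gt_atTop (exp 1)))
  refine ⟨max R (exp 1 + 1), by linarith [le_max_right R (exp 1 + 1)], fun r hr => ?_⟩
  obtain ⟨hsource, hre⟩ := hR r ((le_max_left _ _).trans hr)
  exact RadialSupersolution.radial_supersolution_at hS hu hre hsource

/-- Radial supersolution near infinity for a superexponential weight,
region `G₆` (proof of Theorem 1.5 (F)). -/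
theorem radial_supersolution_near_infinity_G6
    (m p q lam γ : ℝ)
    (hm : 1 < m) (hq : q < m - 1) (hp : p < m - 1 - q) (hlam : 0 < lam)
    (hγ : 2 * (m - 1 - q) + 1 < γ)
    (S u : ℝ → ℝ)
    (hS : ∀ r : ℝ, 1 < r → S r = Real.exp (lam * r ^ γ * Real.log r))
    (hu : ∀ r : ℝ, 1 < r → u r = Real.exp (Real.log r / r)) :
    ∃ R₀ : ℝ, Real.exp 1 < R₀ ∧ ∀ r : ℝ, R₀ ≤ r →
      deriv u r < 0 ∧
      DifferentiableAt ℝ (fun t => S t * |deriv u t| ^ (m - 2) * deriv u t) r ∧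
      deriv (fun t => S t * |deriv u t| ^ (m - 2) * deriv u t) r
        + S r * u r ^ p * |deriv u r| ^ q ≤ 0 :=
  radial_supersolution_near_infinity_G6_general m p q lam γ hm hq hlam hγ S u hS hu
end
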